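/- arXiv:2011.05869 — 3 statements merged into one kernel-verified Lean document; each statement's English description precedes it below -/
import Mathlib

section
/- For the softmax policy update π_{w_{t+1}}(a|s) = π_{w_t}(a|s) exp(αQ̄(s,a)/(1−γ))/Z_t(s) with Z_t(s) = ∑_a π_{w_t}(a|s) exp(αQ̄(s,a)/(1−γ)), for every state s, log Z_t(s) − (α/(1−γ)) V_{π_{w_t}}(s) + (α/(1−γ)) ∑_a π_{w_t}(a|s)|Q̄(s,a) − Q_{π_{w_t}}(s,a)| ≥ 0. -/
open Finset

/-! Jensen's inequality for the convex function `exp` bounds `log Z_t(s)` below by the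
`π_t(·|s)`-average of `α Q̄(s,·)/(1-γ)`, and `α V(s)/(1-γ)` exceeds that average by at most
`α/(1-γ)` times the average of `|Q̄(s,·) - Q(s,·)|`. -/

namespace Real

theorem weighted_sum_le_log_weighted_sum_exp {ι : Type*} (s : Finset ι) {w x : ι → ℝ}
    (hw₀ : ∀ i ∈ s, 0 ≤ w i) (hw₁ : ∑ i ∈ s, w i = 1) :
    ∑ i ∈ s, w i * x i ≤ log (∑ i ∈ s, w i * exp (x i)) := by
  have jensen : exp (∑ i ∈ s, w i * x i) ≤ ∑ i ∈ s, w i * exp (x i) := by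
    simpa only [smul_eq_mul] using
      convexOn_exp.map_sum_le hw₀ hw₁ (fun i _ => Set.mem_univ (x i))
  rwa [le_log_iff_exp_le (lt_of_lt_of_le (exp_pos _) jensen)]

end Real

theorem weighted_sum_le_weighted_sum_add_weighted_sum_abs_sub {ι : Type*} (s : Finset ι)
    {w : ι → ℝ} (hw₀ : ∀ i ∈ s, 0 ≤ w i) (f g : ι → ℝ) :
    ∑ i ∈ s, w i * g i ≤ ∑ i ∈ s, w i * f i + ∑ i ∈ s, w i * |f i - g i| := by
  rw [← sum_add_distrib]
  refine sum_le_sum fun i hi => ?_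
  rw [← mul_add]
  exact mul_le_mul_of_nonneg_left (by linarith [neg_abs_le (f i - g i)]) (hw₀ i hi)

theorem log_partition_lower_bound_general
    {S A : Type*} [Fintype A]
    (γ α : ℝ) (hγ : γ ∈ Set.Ioo (0 : ℝ) 1) (hα : 0 < α)
    (π : S → A → ℝ) (hπnonneg : ∀ s a, 0 ≤ π s a) (hπsum : ∀ s, ∑ a, π s a = 1)
    (Qbar Q : S → A → ℝ) (V : S → ℝ)
    (hV : ∀ s, V s = ∑ a, π s a * Q s a)
    (Z : S → ℝ)
    (hZ : ∀ s, Z s = ∑ a, π s a * Real.exp (α * Qbar s a / (1 - γ))) :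
    ∀ s, 0 ≤ Real.log (Z s) - α / (1 - γ) * V s
          + α / (1 - γ) * ∑ a, π s a * |Qbar s a - Q s a| := by
  intro s
  have hc : 0 ≤ α / (1 - γ) := div_nonneg hα.le (sub_nonneg.mpr hγ.2.le)
  have hlog : α / (1 - γ) * ∑ a, π s a * Qbar s a ≤ Real.log (Z s) := by
    rw [hZ s, mul_sum]
    convert Real.weighted_sum_le_log_weighted_sum_exp univ (fun a _ => hπnonneg s a) (hπsum s)
      using 2 with a
    ring
  have hV_le := mul_le_mul_of_nonneg_left
    (weighted_sum_le_weighted_sum_add_weighted_sum_abs_sub univ (fun a _ => hπnonneg s a)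
      (Qbar s) (Q s)) hc
  rw [← hV s] at hV_le
  linarith

/-- For the softmax policy update with log-partition function
`Z_t(s) = ∑_a π_t(a|s) exp(α Q̄(s,a)/(1−γ))`, for every state `s`,
`log Z_t(s) − (α/(1−γ)) V_{π_t}(s) + (α/(1−γ)) ∑_a π_t(a|s)|Q̄(s,a) − Q_{π_t}(s,a)| ≥ 0`,
where `V_{π_t}(s) = ∑_a π_t(a|s) Q_{π_t}(s,a)`. -/
theorem log_partition_lower_bound
    {S A : Type*} [Fintype S] [Fintype A] [Nonempty A]
    (γ α : ℝ) (hγ : γ ∈ Set.Ioo (0 : ℝ) 1) (hα : 0 < α)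
    (π : S → A → ℝ) (hπnonneg : ∀ s a, 0 ≤ π s a) (hπsum : ∀ s, ∑ a, π s a = 1)
    (Qbar Q : S → A → ℝ) (V : S → ℝ)
    (hV : ∀ s, V s = ∑ a, π s a * Q s a)
    (Z : S → ℝ)
    (hZ : ∀ s, Z s = ∑ a, π s a * Real.exp (α * Qbar s a / (1 - γ))) :
    ∀ s, 0 ≤ Real.log (Z s) - α / (1 - γ) * V s
          + α / (1 - γ) * ∑ a, π s a * |Qbar s a - Q s a| :=
  log_partition_lower_bound_general γ α hγ hα π hπnonneg hπsum Qbar Q V hV Z hZ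
end

section
/- Let ψ : X → ℝ^d with ‖ψ(x)‖₂ ≤ 1, let μ be a probability distribution on X, and suppose there exists C₀ > 0 such that for every unit vector u ∈ ℝ^d and every τ ≥ 0, P_{x∼μ}(|uᵀψ(x)| ≤ τ) ≤ C₀ τ. Let θ₀ = (θ_{0,1},…,θ_{0,m}) with d₁ ≤ ‖θ_{0,r}‖₂ for all r, and let θ = (θ₁,…,θ_m) with ∑_r ‖θ_r − θ_{0,r}‖₂² ≤ R². Then E_{x∼μ}[(1/m) ∑_{r=1}^m |𝟙(θ_rᵀψ(x) > 0) − 𝟙(θ_{0,r}ᵀψ(x) > 0)|] ≤ C₀R/(d₁√m). -/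
open MeasureTheory RealInnerProductSpace

/-!
If the activation of neuron `r` on the feature `v = ψ x` differs between `θ₀ r` and `θ r`, the
two inner products have opposite signs, so
`|⟪θ₀ r, v⟫| ≤ |⟪θ r - θ₀ r, v⟫| ≤ ‖θ r - θ₀ r‖`: the feature lies in a slab of half-width
`‖θ r - θ₀ r‖ / ‖θ₀ r‖` around the hyperplane orthogonal to `θ₀ r`. Anti-concentration bounds the
probability of that slab by `C₀ ‖θ r - θ₀ r‖ / d₁`, and Cauchy–Schwarz turns
`∑ r, ‖θ r - θ₀ r‖ ^ 2 ≤ R ^ 2` into `∑ r, ‖θ r - θ₀ r‖ ≤ √m R`.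
-/

lemma abs_ite_pos_sub_ite_pos_le (a b : ℝ) :
    |(if 0 < a then (1 : ℝ) else 0) - (if 0 < b then 1 else 0)|
      ≤ if |b| ≤ |a - b| then 1 else 0 := by
  by_cases ha : 0 < a <;> by_cases hb : 0 < b <;> simp only [ha, hb, if_true, if_false]
  · norm_num; split_ifs <;> norm_num
  · rw [if_pos (by rw [abs_of_nonpos (not_lt.mp hb)]; exact le_abs.mpr (Or.inl (by linarith)))]
    norm_num
  · rw [if_pos (by rw [abs_of_pos hb]; exact le_abs.mpr (Or.inr (by linarith)))]
    norm_num
  · norm_num; split_ifs <;> norm_num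

lemma sum_le_sqrt_card_mul_of_sum_sq_le {ι : Type*} (s : Finset ι) (f : ι → ℝ) {R : ℝ}
    (hR : 0 ≤ R) (h : ∑ i ∈ s, f i ^ 2 ≤ R ^ 2) :
    ∑ i ∈ s, f i ≤ √(s.card : ℝ) * R := by
  rw [← Real.sqrt_sq hR, ← Real.sqrt_mul (Nat.cast_nonneg _)]
  exact Real.le_sqrt_of_sq_le <| sq_sum_le_card_mul_sum_sq.trans <|
    mul_le_mul_of_nonneg_left h (Nat.cast_nonneg _)

section ActivationFlip

variable {E : Type*} [NormedAddCommGroup E] [InnerProductSpace ℝ E]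

noncomputable def activationFlip (θ θ₀ v : E) : ℝ :=
  |(if 0 < ⟪θ, v⟫ then (1 : ℝ) else 0) - (if 0 < ⟪θ₀, v⟫ then (1 : ℝ) else 0)|

lemma activationFlip_nonneg (θ θ₀ v : E) : 0 ≤ activationFlip θ θ₀ v := abs_nonneg _

lemma activationFlip_le_one (θ θ₀ v : E) : activationFlip θ θ₀ v ≤ 1 := by
  unfold activationFlip
  split_ifs <;> norm_num

lemma activationFlip_le_ite {θ θ₀ v : E} (hv : ‖v‖ ≤ 1) :
    activationFlip θ θ₀ v ≤ if |⟪θ₀, v⟫| ≤ ‖θ - θ₀‖ then 1 else 0 := by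
  have hshift : |⟪θ, v⟫ - ⟪θ₀, v⟫| ≤ ‖θ - θ₀‖ := by
    rw [← inner_sub_left]
    exact (abs_real_inner_le_norm _ _).trans (mul_le_of_le_one_right (norm_nonneg _) hv)
  refine (abs_ite_pos_sub_ite_pos_le _ _).trans ?_
  split_ifs with h₁ h₂ <;> norm_num
  exact h₂ (h₁.trans hshift)

lemma measurable_activationFlip [MeasurableSpace E] [OpensMeasurableSpace E] (θ θ₀ : E) :
    Measurable (activationFlip θ θ₀) := by
  have hpos : ∀ w : E, MeasurableSet {v : E | 0 < ⟪w, v⟫} := fun w =>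
    measurableSet_lt measurable_const (continuous_const.inner continuous_id).measurable
  exact ((measurable_const.ite (hpos θ) measurable_const).sub
    (measurable_const.ite (hpos θ₀) measurable_const)).abs

end ActivationFlip

section Expectation

variable {X E : Type*} [MeasurableSpace X] [NormedAddCommGroup E] [InnerProductSpace ℝ E]
  {μ : Measure X} {ψ : X → E} {C₀ : ℝ}

lemma measure_abs_inner_le_le_of_anticoncentration
    (hanti : ∀ u : E, ‖u‖ = 1 → ∀ τ : ℝ, 0 ≤ τ →
      μ {x | |⟪u, ψ x⟫| ≤ τ} ≤ ENNReal.ofReal (C₀ * τ))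
    {w : E} (hw : w ≠ 0) {τ : ℝ} (hτ : 0 ≤ τ) :
    μ {x | |⟪w, ψ x⟫| ≤ τ} ≤ ENNReal.ofReal (C₀ * (τ / ‖w‖)) := by
  have hw' : 0 < ‖w‖ := norm_pos_iff.mpr hw
  have hscale : {x | |⟪w, ψ x⟫| ≤ τ} = {x | |⟪‖w‖⁻¹ • w, ψ x⟫| ≤ τ / ‖w‖} := by
    ext x
    rw [Set.mem_ofPred_eq, Set.mem_ofPred_eq, real_inner_smul_left, abs_mul, abs_inv, abs_norm,
      inv_mul_le_iff₀ hw', mul_div_cancel₀ _ hw'.ne']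
  rw [hscale]
  exact hanti _ (norm_smul_inv_norm hw) _ (by positivity)

lemma integrable_activationFlip_comp [IsFiniteMeasure μ] [MeasurableSpace E]
    [OpensMeasurableSpace E] (hψmeas : Measurable ψ) (θ θ₀ : E) :
    Integrable (fun x => activationFlip θ θ₀ (ψ x)) μ :=
  .of_bound ((measurable_activationFlip θ θ₀).comp hψmeas).aestronglyMeasurable 1
    (.of_forall fun x => by
      rw [Real.norm_of_nonneg (activationFlip_nonneg _ _ _)]
      exact activationFlip_le_one _ _ _)

lemma integral_activationFlip_le [IsFiniteMeasure μ] [MeasurableSpace E] [OpensMeasurableSpace E]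
    (hψmeas : Measurable ψ) (hψ : ∀ x, ‖ψ x‖ ≤ 1) (hC₀ : 0 ≤ C₀)
    (hanti : ∀ u : E, ‖u‖ = 1 → ∀ τ : ℝ, 0 ≤ τ →
      μ {x | |⟪u, ψ x⟫| ≤ τ} ≤ ENNReal.ofReal (C₀ * τ))
    (θ : E) {θ₀ : E} (hθ₀ : θ₀ ≠ 0) :
    ∫ x, activationFlip θ θ₀ (ψ x) ∂μ ≤ C₀ * (‖θ - θ₀‖ / ‖θ₀‖) := by
  set S := {x | |⟪θ₀, ψ x⟫| ≤ ‖θ - θ₀‖}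
  have hS : MeasurableSet S :=
    measurableSet_le ((continuous_const.inner continuous_id).measurable.comp hψmeas).abs
      measurable_const
  calc ∫ x, activationFlip θ θ₀ (ψ x) ∂μ ≤ ∫ x, S.indicator 1 x ∂μ := by
        refine integral_mono_of_nonneg (.of_forall fun x => activationFlip_nonneg _ _ _)
          ((integrable_indicator_iff hS).mpr (integrableOn_const (measure_ne_top _ _)))
          (.of_forall fun x => ?_)
        simpa only [S, Set.indicator_apply, Set.mem_ofPred_eq, Pi.one_apply] using activationFlip_le_ite (hψ x)
    _ = μ.real S := integral_indicator_one hS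
    _ ≤ C₀ * (‖θ - θ₀‖ / ‖θ₀‖) := by
        refine ENNReal.toReal_le_of_le_ofReal (by positivity) ?_
        exact measure_abs_inner_le_le_of_anticoncentration hanti hθ₀ (norm_nonneg _)

end Expectation

theorem expected_activation_flip_bound_general
    {X : Type*} [MeasurableSpace X] (μ : Measure X) [IsProbabilityMeasure μ]
    {d m : ℕ}
    (ψ : X → EuclideanSpace ℝ (Fin d)) (hψmeas : Measurable ψ)
    (hψ : ∀ x, ‖ψ x‖ ≤ 1)
    (C₀ : ℝ) (hC₀ : 0 < C₀)
    (hanti : ∀ u : EuclideanSpace ℝ (Fin d), ‖u‖ = 1 → ∀ τ : ℝ, 0 ≤ τ →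
      μ {x | |⟪u, ψ x⟫| ≤ τ} ≤ ENNReal.ofReal (C₀ * τ))
    (θ₀ θ : Fin m → EuclideanSpace ℝ (Fin d))
    (d₁ R : ℝ) (hd₁ : 0 < d₁) (hR : 0 ≤ R)
    (hθ₀ : ∀ r, d₁ ≤ ‖θ₀ r‖)
    (hθ : ∑ r, ‖θ r - θ₀ r‖ ^ 2 ≤ R ^ 2) :
    ∫ x, (1 / (m : ℝ)) * ∑ r, |(if 0 < ⟪θ r, ψ x⟫ then (1 : ℝ) else 0)
        - (if 0 < ⟪θ₀ r, ψ x⟫ then (1 : ℝ) else 0)| ∂μ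
      ≤ C₀ * R / (d₁ * Real.sqrt m) := by
  have hflip (r : Fin m) :
      ∫ x, activationFlip (θ r) (θ₀ r) (ψ x) ∂μ ≤ C₀ / d₁ * ‖θ r - θ₀ r‖ := by
    have hθ₀ne : θ₀ r ≠ 0 := norm_pos_iff.mp (hd₁.trans_le (hθ₀ r))
    refine (integral_activationFlip_le hψmeas hψ hC₀.le hanti (θ r) hθ₀ne).trans ?_
    rw [div_mul_eq_mul_div, mul_div_assoc]
    gcongr
    exact hθ₀ r
  have hsum : ∑ r, ‖θ r - θ₀ r‖ ≤ √m * R := by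
    simpa using sum_le_sqrt_card_mul_of_sum_sq_le Finset.univ _ hR hθ
  change ∫ x, 1 / (m : ℝ) * ∑ r, activationFlip (θ r) (θ₀ r) (ψ x) ∂μ ≤ _
  rw [integral_const_mul,
    integral_finsetSum _ fun r _ => integrable_activationFlip_comp hψmeas (θ r) (θ₀ r)]
  calc 1 / (m : ℝ) * ∑ r, ∫ x, activationFlip (θ r) (θ₀ r) (ψ x) ∂μ
      ≤ 1 / (m : ℝ) * ∑ r, C₀ / d₁ * ‖θ r - θ₀ r‖ := by gcongr with r; exact hflip r
    _ = 1 / (m : ℝ) * (C₀ / d₁ * ∑ r, ‖θ r - θ₀ r‖) := by rw [← Finset.mul_sum]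
    _ ≤ 1 / (m : ℝ) * (C₀ / d₁ * (√m * R)) := by gcongr
    _ = √m / m * (C₀ * R / d₁) := by ring
    _ = C₀ * R / (d₁ * √m) := by rw [Real.sqrt_div_self']; ring

/-- Under the anti-concentration assumption
`P_{x∼μ}(|uᵀψ(x)| ≤ τ) ≤ C₀ τ` for every unit vector `u` and `τ ≥ 0`, with
`d₁ ≤ ‖θ_{0,r}‖₂` and `∑_r ‖θ_r − θ_{0,r}‖₂² ≤ R²`, the expected fraction of
flipped ReLU activation patterns is bounded:
`E_{x∼μ}[(1/m) ∑_r |𝟙(θ_rᵀψ(x) > 0) − 𝟙(θ_{0,r}ᵀψ(x) > 0)|] ≤ C₀ R/(d₁ √m)`. -/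
theorem expected_activation_flip_bound
    {X : Type*} [MeasurableSpace X] (μ : Measure X) [IsProbabilityMeasure μ]
    {d m : ℕ} (hm : 0 < m)
    (ψ : X → EuclideanSpace ℝ (Fin d)) (hψmeas : Measurable ψ)
    (hψ : ∀ x, ‖ψ x‖ ≤ 1)
    (C₀ : ℝ) (hC₀ : 0 < C₀)
    (hanti : ∀ u : EuclideanSpace ℝ (Fin d), ‖u‖ = 1 → ∀ τ : ℝ, 0 ≤ τ →
      μ {x | |⟪u, ψ x⟫| ≤ τ} ≤ ENNReal.ofReal (C₀ * τ))
    (θ₀ θ : Fin m → EuclideanSpace ℝ (Fin d))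
    (d₁ R : ℝ) (hd₁ : 0 < d₁) (hR : 0 ≤ R)
    (hθ₀ : ∀ r, d₁ ≤ ‖θ₀ r‖)
    (hθ : ∑ r, ‖θ r - θ₀ r‖ ^ 2 ≤ R ^ 2) :
    ∫ x, (1 / (m : ℝ)) * ∑ r, |(if 0 < ⟪θ r, ψ x⟫ then (1 : ℝ) else 0)
        - (if 0 < ⟪θ₀ r, ψ x⟫ then (1 : ℝ) else 0)| ∂μ
      ≤ C₀ * R / (d₁ * Real.sqrt m) :=
  expected_activation_flip_bound_general μ ψ hψmeas hψ C₀ hC₀ hanti θ₀ θ d₁ R hd₁ hR hθ₀ hθ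
end

section
/- Consider the tabular softmax NPG update with approximate Q-values: π_{t+1}(a|s) = π_t(a|s)exp(αQ̄_t(s,a)/(1−γ))/Z_t(s). Then for the optimal policy π* and its visitation distribution ν*, (1−γ)·(J(π*) − J(π_t)) ≤ (1/α)E_{s∼ν*}[D_KL(π*(·|s)‖π_t(·|s)) − D_KL(π*(·|s)‖π_{t+1}(·|s))]·(1−γ) + (1−γ)·[ (1/α)E_{s∼ν*}(log Z_t(s) − (α/(1−γ))V_{π_t}(s)) + (1/(1−γ))E_{s∼ν*}∑_a π*(a|s)(Q_{π_t}(s,a) − Q̄_t(s,a)) ]. Equivalently, J(π*) − J(π_t) equals the sum of the KL telescoping term, the log-partition term, and the Q-approximation term as derived from the performance difference lemma. -/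
open Finset

/-! Summing the Bellman equations of `π_t` and `π*` against the visitation equation of `ν*`
gives the performance difference lemma
`(1 - γ) (J(π*) - J(π_t)) = E_{s∼ν*} [∑_a π*(a|s) Q_{π_t}(s,a) - V_{π_t}(s)]`.
The update is an exponential tilt, `log (π_{t+1} / π_t) = α Q̄_t / (1 - γ) - log Z_t`, so the drop
of `KL(π*‖·)` from `π_t` to `π_{t+1}` is `α/(1 - γ) ∑_a π* Q̄_t - log Z_t`. Substituting this,
the right-hand side collapses to the same expectation: the bound holds with equality. -/

section Visitation

variable {S A : Type*} [Fintype S] [Fintype A] {γ : ℝ} {P : S → A → S → ℝ}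
  {π : S → A → ℝ} {ρ ν : S → ℝ}

theorem sum_visitation_mul
    (hν : ∀ s, ν s = (1 - γ) * ρ s + γ * ∑ s', ν s' * ∑ a, π s' a * P s' a s) (f : S → ℝ) :
    ∑ s, ν s * f s
      = (1 - γ) * ∑ s, ρ s * f s + γ * ∑ s, ν s * ∑ a, π s a * ∑ s', P s a s' * f s' := by
  calc ∑ s, ν s * f s
      = ∑ s, ((1 - γ) * ρ s + γ * ∑ s', ν s' * ∑ a, π s' a * P s' a s) * f s :=
        sum_congr rfl fun s _ => by rw [← hν s]
    _ = _ := by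
        simp only [add_mul, sum_add_distrib, mul_sum, sum_mul, mul_assoc]
        congr 1
        rw [sum_comm]
        exact sum_congr rfl fun _ _ => sum_comm

theorem sum_visitation_mul_bellman_sub
    (hν : ∀ s, ν s = (1 - γ) * ρ s + γ * ∑ s', ν s' * ∑ a, π s' a * P s' a s)
    (r : S → A → ℝ) (W : S → ℝ) :
    ∑ s, ν s * ((∑ a, π s a * (r s a + γ * ∑ s', P s a s' * W s')) - W s)
      = ∑ s, ν s * ∑ a, π s a * r s a - (1 - γ) * ∑ s, ρ s * W s := by
  have hsplit : ∑ s, ν s * ((∑ a, π s a * (r s a + γ * ∑ s', P s a s' * W s')) - W s)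
      = ∑ s, ν s * ∑ a, π s a * r s a
        + γ * ∑ s, ν s * ∑ a, π s a * ∑ s', P s a s' * W s' - ∑ s, ν s * W s := by
    simp only [mul_sub, mul_add, sum_sub_distrib, sum_add_distrib, mul_sum]
    congr 2
    exact sum_congr rfl fun s _ => sum_congr rfl fun a _ => sum_congr rfl fun s' _ => by ring
  rw [hsplit, sum_visitation_mul hν W]
  ring

theorem performance_difference {r : S → A → ℝ} {V Vstar : S → ℝ} {Q Qstar : S → A → ℝ}
    (hν : ∀ s, ν s = (1 - γ) * ρ s + γ * ∑ s', ν s' * ∑ a, π s' a * P s' a s)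
    (hQ : ∀ s a, Q s a = r s a + γ * ∑ s', P s a s' * V s')
    (hQstar : ∀ s a, Qstar s a = r s a + γ * ∑ s', P s a s' * Vstar s')
    (hVstar : ∀ s, Vstar s = ∑ a, π s a * Qstar s a) :
    (1 - γ) * ((∑ s, ρ s * Vstar s) - ∑ s, ρ s * V s)
      = ∑ s, ν s * ((∑ a, π s a * Q s a) - V s) := by
  have hstar := sum_visitation_mul_bellman_sub hν r Vstar
  have hcur := sum_visitation_mul_bellman_sub hν r V
  simp only [← hQstar, ← hVstar, sub_self, mul_zero, sum_const_zero] at hstar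
  simp only [← hQ] at hcur
  rw [hcur]
  linarith

end Visitation

theorem sum_mul_log_div_sub_sum_mul_log_div_of_tilt {A : Type*} [Fintype A]
    {p q q' g : A → ℝ} {Z : ℝ} (hq : ∀ a, 0 < q a) (hp : ∑ a, p a = 1)
    (hZ : Z = ∑ a, q a * Real.exp (g a)) (hq' : ∀ a, q' a = q a * Real.exp (g a) / Z) :
    (∑ a, p a * Real.log (p a / q a)) - ∑ a, p a * Real.log (p a / q' a)
      = ∑ a, p a * g a - Real.log Z := by
  have hterm : ∀ a ∈ univ, p a * Real.log (p a / q a) - p a * Real.log (p a / q' a)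
      = p a * g a - p a * Real.log Z := by
    intro a _
    by_cases hpa : p a = 0
    · simp [hpa]
    have hZpos : 0 < Z :=
      hZ ▸ sum_pos (fun b _ => mul_pos (hq b) (Real.exp_pos _)) ⟨a, mem_univ a⟩
    have hq'pos : 0 < q' a := by rw [hq' a]; exact div_pos (mul_pos (hq a) (Real.exp_pos _)) hZpos
    rw [Real.log_div hpa (hq a).ne', Real.log_div hpa hq'pos.ne', hq' a,
      Real.log_div (mul_pos (hq a) (Real.exp_pos _)).ne' hZpos.ne',
      Real.log_mul (hq a).ne' (Real.exp_pos _).ne', Real.log_exp]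
    ring
  rw [← sum_sub_distrib, sum_congr rfl hterm, sum_sub_distrib, ← sum_mul, hp, one_mul]

theorem npg_optimality_gap_bound_general
    {S A : Type*} [Fintype S] [Fintype A]
    (γ α : ℝ) (hγ : γ ∈ Set.Ioo (0 : ℝ) 1) (hα : 0 < α)
    (P : S → A → S → ℝ) (r : S → A → ℝ) (ρ : S → ℝ)
    -- current policy `π_t`, next policy `π_{t+1}`, optimal policy `π*`
    (πt πt1 πstar : S → A → ℝ)
    (hπt : ∀ s a, 0 < πt s a)
    (hπstarsum : ∀ s, ∑ a, πstar s a = 1)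
    -- value functions of `π_t` and `π*`
    (V Vstar : S → ℝ) (Q Qstar : S → A → ℝ)
    (hQ : ∀ s a, Q s a = r s a + γ * ∑ s', P s a s' * V s')
    (hQstar : ∀ s a, Qstar s a = r s a + γ * ∑ s', P s a s' * Vstar s')
    (hVstar : ∀ s, Vstar s = ∑ a, πstar s a * Qstar s a)
    -- approximate Q-values, log-partition function, and the NPG update
    (Qbar : S → A → ℝ) (Z : S → ℝ)
    (hZ : ∀ s, Z s = ∑ a, πt s a * Real.exp (α * Qbar s a / (1 - γ)))
    (hupd : ∀ s a, πt1 s a = πt s a * Real.exp (α * Qbar s a / (1 - γ)) / Z s)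
    -- discounted visitation distribution of `π*` started from `ρ`
    (νstar : S → ℝ)
    (hν : ∀ s, νstar s
        = (1 - γ) * ρ s + γ * ∑ s', νstar s' * ∑ a, πstar s' a * P s' a s) :
    (1 - γ) * ((∑ s, ρ s * Vstar s) - (∑ s, ρ s * V s))
      ≤ (1 - γ) * ((1 / α) * ∑ s, νstar s *
            ((∑ a, πstar s a * Real.log (πstar s a / πt s a))
              - (∑ a, πstar s a * Real.log (πstar s a / πt1 s a))))
        + (1 - γ) *
          ((1 / α) * (∑ s, νstar s * (Real.log (Z s) - α / (1 - γ) * V s))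
            + (1 / (1 - γ)) *
                ∑ s, νstar s * ∑ a, πstar s a * (Q s a - Qbar s a)) := by
  have h1γ : 1 - γ ≠ 0 := by linarith [hγ.2]
  have hKL s := sum_mul_log_div_sub_sum_mul_log_div_of_tilt (hπt s) (hπstarsum s) (hZ s) (hupd s)
  have hstate : ∀ s, (∑ a, πstar s a * Q s a) - V s
      = (1 - γ) * (1 / α * (∑ a, πstar s a * (α * Qbar s a / (1 - γ)) - Real.log (Z s)))
        + (1 - γ) * (1 / α * (Real.log (Z s) - α / (1 - γ) * V s)
          + 1 / (1 - γ) * ∑ a, πstar s a * (Q s a - Qbar s a)) := by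
    intro s
    simp only [mul_sub, sum_sub_distrib, mul_div_assoc', ← sum_div, mul_left_comm _ α, ← mul_sum]
    field_simp
    ring
  rw [performance_difference hν hQ hQstar hVstar]
  refine le_of_eq ?_
  simp only [hstate, hKL, mul_add, sum_add_distrib, mul_left_comm (νstar _), ← mul_sum]

/-- **Upper bound on the optimality gap for approximate tabular NPG.** For the
tabular softmax NPG update with approximate Q-values,
`π_{t+1}(a|s) = π_t(a|s) exp(α Q̄_t(s,a)/(1−γ)) / Z_t(s)`, for the optimal
policy `π*` with discounted visitation distribution `ν*`:
`(1−γ)(J(π*) − J(π_t))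
  ≤ (1−γ)(1/α) E_{s∼ν*}[D_KL(π*‖π_t) − D_KL(π*‖π_{t+1})]
  + (1−γ)[(1/α) E_{s∼ν*}(log Z_t(s) − (α/(1−γ)) V_{π_t}(s))
      + (1/(1−γ)) E_{s∼ν*} ∑_a π*(a|s)(Q_{π_t}(s,a) − Q̄_t(s,a))]`. -/
theorem npg_optimality_gap_bound
    {S A : Type*} [Fintype S] [Fintype A]
    (γ α cmax : ℝ) (hγ : γ ∈ Set.Ioo (0 : ℝ) 1) (hα : 0 < α) (hcmax : 0 ≤ cmax)
    (P : S → A → S → ℝ) (hPnonneg : ∀ s a s', 0 ≤ P s a s')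
    (hPsum : ∀ s a, ∑ s', P s a s' = 1)
    (r : S → A → ℝ) (hr : ∀ s a, r s a ∈ Set.Icc (0 : ℝ) cmax)
    (ρ : S → ℝ) (hρ : ∀ s, 0 ≤ ρ s) (hρsum : ∑ s, ρ s = 1)
    -- current policy `π_t`, next policy `π_{t+1}`, optimal policy `π*`
    (πt πt1 πstar : S → A → ℝ)
    (hπt : ∀ s a, 0 < πt s a) (hπtsum : ∀ s, ∑ a, πt s a = 1)
    (hπstar : ∀ s a, 0 ≤ πstar s a) (hπstarsum : ∀ s, ∑ a, πstar s a = 1)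
    -- value functions of `π_t` and `π*`
    (V Vstar : S → ℝ) (Q Qstar : S → A → ℝ)
    (hQ : ∀ s a, Q s a = r s a + γ * ∑ s', P s a s' * V s')
    (hV : ∀ s, V s = ∑ a, πt s a * Q s a)
    (hQstar : ∀ s a, Qstar s a = r s a + γ * ∑ s', P s a s' * Vstar s')
    (hVstar : ∀ s, Vstar s = ∑ a, πstar s a * Qstar s a)
    -- approximate Q-values, log-partition function, and the NPG update
    (Qbar : S → A → ℝ) (Z : S → ℝ)
    (hZ : ∀ s, Z s = ∑ a, πt s a * Real.exp (α * Qbar s a / (1 - γ)))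
    (hupd : ∀ s a, πt1 s a = πt s a * Real.exp (α * Qbar s a / (1 - γ)) / Z s)
    -- discounted visitation distribution of `π*` started from `ρ`
    (νstar : S → ℝ) (hνnonneg : ∀ s, 0 ≤ νstar s)
    (hν : ∀ s, νstar s
        = (1 - γ) * ρ s + γ * ∑ s', νstar s' * ∑ a, πstar s' a * P s' a s) :
    (1 - γ) * ((∑ s, ρ s * Vstar s) - (∑ s, ρ s * V s))
      ≤ (1 - γ) * ((1 / α) * ∑ s, νstar s *
            ((∑ a, πstar s a * Real.log (πstar s a / πt s a))
              - (∑ a, πstar s a * Real.log (πstar s a / πt1 s a))))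
        + (1 - γ) *
          ((1 / α) * (∑ s, νstar s * (Real.log (Z s) - α / (1 - γ) * V s))
            + (1 / (1 - γ)) *
                ∑ s, νstar s * ∑ a, πstar s a * (Q s a - Qbar s a)) :=
  npg_optimality_gap_bound_general γ α hγ hα P r ρ πt πt1 πstar hπt hπstarsum V Vstar Q Qstar hQ
    hQstar hVstar Qbar Z hZ hupd νstar hν
end
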